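/- arXiv:2501.02097 — 2 statements merged into one kernel-verified Lean document; each statement's English description precedes it below -/
import Mathlib

section
/- (Konyagin–Lev) Fix k ≥ 2, let Z be an abelian group and A ⊆ Z a nonempty finite subset. Let F be the free abelian group on the set A with canonical generators e_a for a ∈ A, let X be the subgroup of F generated by all elements e_{a₁} + ⋯ + e_{a_k} − e_{a₁'} − ⋯ − e_{a_k'} for a₁,…,a_k,a₁',…,a_k' ∈ A with a₁ + ⋯ + a_k = a₁' + ⋯ + a_k' in Z, let Z' = F/X, and let ι : A → Z' send a to the class of e_a. Then ι is a Freiman isomorphism of order k from A onto its image ι(A): for all a₁,…,a_k,a₁',…,a_k' ∈ A, ι(a₁) + ⋯ + ι(a_k) = ι(a₁') + ⋯ + ι(a_k') in Z' if and only if a₁ + ⋯ + a_k = a₁' + ⋯ + a_k' in Z; in particular ι is injective on A. Moreover Z' is generated as a group by ι(A). -/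
/-- A function `f : Z → W` is a Freiman homomorphism of order `k` from `A ⊆ Z` to `B ⊆ W`
if it maps `A` into `B` and preserves equality of `k`-fold sums of elements of `A`. -/
def IsFreimanHomOn {Z W : Type*} [AddCommMonoid Z] [AddCommMonoid W]
    (k : ℕ) (A : Set Z) (B : Set W) (f : Z → W) : Prop :=
  Set.MapsTo f A B ∧
    ∀ s t : Fin k → Z, (∀ i, s i ∈ A) → (∀ i, t i ∈ A) →
      (∑ i, s i) = (∑ i, t i) → (∑ i, f (s i)) = (∑ i, f (t i))

/-- The subgroup of relations in the free abelian group on `A`: it is generated by the elements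
`e_{a₁} + ⋯ + e_{a_k} − e_{a₁'} − ⋯ − e_{a_k'}` for tuples of elements of `A` with
`a₁ + ⋯ + a_k = a₁' + ⋯ + a_k'` in `Z`. -/
def freimanRelations (k : ℕ) {Z : Type*} [AddCommGroup Z] (A : Set Z) :
    AddSubgroup (FreeAbelianGroup ↥A) :=
  AddSubgroup.closure
    {x | ∃ s t : Fin k → ↥A,
      (∑ i, (s i : Z)) = (∑ i, (t i : Z)) ∧
      x = (∑ i, FreeAbelianGroup.of (s i)) - (∑ i, FreeAbelianGroup.of (t i))}

/-- The universal ambient group `Z' = F/X` of Konyagin and Lev. -/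
def universalAmbientGroup (k : ℕ) {Z : Type*} [AddCommGroup Z] (A : Set Z) : Type _ :=
  FreeAbelianGroup ↥A ⧸ freimanRelations k A

noncomputable instance (k : ℕ) {Z : Type*} [AddCommGroup Z] (A : Set Z) :
    AddCommGroup (universalAmbientGroup k A) :=
  QuotientAddGroup.Quotient.addCommGroup (freimanRelations k A)

/-- The canonical map `ι : A → Z'` sending `a` to the class of `e_a`. -/
def universalEmbedding (k : ℕ) {Z : Type*} [AddCommGroup Z] (A : Set Z) :
    ↥A → universalAmbientGroup k A :=
  fun a => QuotientAddGroup.mk (FreeAbelianGroup.of a)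

theorem freimanRelations_le_ker {Z : Type*} [AddCommGroup Z] (k : ℕ) (A : Set Z) :
    freimanRelations k A ≤ (FreeAbelianGroup.lift (fun a : ↥A => (a : Z))).ker := by
  rw [freimanRelations, AddSubgroup.closure_le]
  rintro x ⟨s, t, hst, rfl⟩
  simp only [SetLike.mem_coe, AddMonoidHom.mem_ker, map_sub, map_sum,
    FreeAbelianGroup.lift_apply_of, hst, sub_self]

theorem konyagin_lev_embedding
    {Z : Type*} [AddCommGroup Z] (k : ℕ) (hk : 2 ≤ k)
    (A : Set Z) (hAne : A.Nonempty) (hAfin : A.Finite) :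
    (∀ s t : Fin k → ↥A,
        (∑ i, universalEmbedding k A (s i)) = (∑ i, universalEmbedding k A (t i)) ↔
          (∑ i, (s i : Z)) = (∑ i, (t i : Z))) ∧
      Function.Injective (universalEmbedding k A) ∧
      AddSubgroup.closure (Set.range (universalEmbedding k A)) = ⊤ := by
  set φ := FreeAbelianGroup.lift (fun a : ↥A => (a : Z)) with hφ
  have hker := freimanRelations_le_ker k A
  have key : ∀ s t : Fin k → ↥A,
      (∑ i, universalEmbedding k A (s i)) = (∑ i, universalEmbedding k A (t i)) ↔
        (∑ i, (s i : Z)) = (∑ i, (t i : Z)) := by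
    intro s t
    have hmk : ∀ u : Fin k → ↥A,
        (∑ i, universalEmbedding k A (u i)) =
          QuotientAddGroup.mk (∑ i, FreeAbelianGroup.of (u i)) := by
      intro u
      simp [universalEmbedding]
      rfl
    rw [hmk s, hmk t]
    erw [QuotientAddGroup.eq]
    constructor
    · intro h
      have h2 := hker h
      rw [AddMonoidHom.mem_ker, map_add, map_neg, map_sum, map_sum] at h2
      simp only [FreeAbelianGroup.lift_apply_of] at h2
      exact neg_add_eq_zero.mp h2
    · intro h
      apply AddSubgroup.subset_closure
      refine ⟨t, s, h.symm, ?_⟩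
      abel
  refine ⟨key, ?_, ?_⟩
  · intro a b hab
    have h : -(FreeAbelianGroup.of a) + FreeAbelianGroup.of b ∈ freimanRelations k A := by
      rw [universalEmbedding, universalEmbedding] at hab
      erw [QuotientAddGroup.eq] at hab
      exact hab
    have h2 := hker h
    rw [AddMonoidHom.mem_ker, map_add, map_neg, FreeAbelianGroup.lift_apply_of,
      FreeAbelianGroup.lift_apply_of] at h2
    exact Subtype.ext (neg_add_eq_zero.mp h2)
  · rw [eq_top_iff]
    rintro x -
    induction x using QuotientAddGroup.induction_on with
    | H x =>
      induction x using FreeAbelianGroup.induction_on with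
      | zero => exact zero_mem _
      | of a => exact AddSubgroup.subset_closure (Set.mem_range_self a)
      | neg a _ => exact neg_mem (AddSubgroup.subset_closure (Set.mem_range_self a))
      | add x y hx hy =>
        have : (QuotientAddGroup.mk (x + y) : universalAmbientGroup k A) =
            QuotientAddGroup.mk x + QuotientAddGroup.mk y := rfl
        rw [this]
        exact add_mem hx hy
end

section
/- Fix k ≥ 2, let Z be an abelian group, let A ⊆ Z be a nonempty finite subset, and let a₁,…,a_k, a₁',…,a_k' ∈ A satisfy a₁ + ⋯ + a_k ≠ a₁' + ⋯ + a_k'. Then there exists a Freiman homomorphism χ of order k from A to the circle group 𝕋 = ℝ/ℤ such that χ(a₁) + ⋯ + χ(a_k) ≠ χ(a₁') + ⋯ + χ(a_k'). (That is, Freiman homomorphisms of order k into 𝕋 separate distinct k-fold sums of elements of A.) -/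
open AddSubgroup in
noncomputable def myIota : AddCircle (1 : ℚ) →+ AddCircle (1 : ℝ) :=
  QuotientAddGroup.lift _ ((QuotientAddGroup.mk' _).comp (Rat.castHom ℝ).toAddMonoidHom) (by
    intro q hq
    obtain ⟨n, hn⟩ := hq
    simp only [AddMonoidHom.comp_apply, RingHom.toAddMonoidHom_eq_coe,
      AddMonoidHom.coe_coe, QuotientAddGroup.mk'_apply, QuotientAddGroup.eq_zero_iff]
    rw [AddMonoidHom.mem_ker, AddMonoidHom.comp_apply, QuotientAddGroup.mk'_apply,
      QuotientAddGroup.eq_zero_iff]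
    refine ⟨n, ?_⟩
    simp only [zsmul_eq_mul, mul_one, Rat.coe_castHom] at hn ⊢
    rw [← hn]; simp)

lemma myIota_inj : Function.Injective myIota := by
  rw [injective_iff_map_eq_zero]
  intro a
  induction a using QuotientAddGroup.induction_on with
  | H q =>
    intro h
    have : ((q : ℝ) : AddCircle (1:ℝ)) = 0 := h
    rw [QuotientAddGroup.eq_zero_iff] at this ⊢
    obtain ⟨n, hn⟩ := this
    refine ⟨n, ?_⟩
    simp only [zsmul_eq_mul, mul_one] at hn ⊢
    exact_mod_cast hn



theorem freiman_homs_to_circle_separate_sums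
    {Z : Type*} [AddCommGroup Z] (k : ℕ) (hk : 2 ≤ k)
    (A : Set Z) (hAne : A.Nonempty) (hAfin : A.Finite)
    (s t : Fin k → Z) (hs : ∀ i, s i ∈ A) (ht : ∀ i, t i ∈ A)
    (hst : (∑ i, s i) ≠ (∑ i, t i)) :
    ∃ χ : Z → AddCircle (1 : ℝ),
      IsFreimanHomOn k A (Set.univ : Set (AddCircle (1 : ℝ))) χ ∧
        (∑ i, χ (s i)) ≠ (∑ i, χ (t i)) := by
  set d : Z := (∑ i, s i) - (∑ i, t i) with hd
  have hdne : d ≠ 0 := sub_ne_zero.mpr hst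
  obtain ⟨c, hc⟩ := CharacterModule.exists_character_apply_ne_zero_of_ne_zero hdne
  set ψ : Z →+ AddCircle (1 : ℝ) := myIota.comp (c : Z →+ AddCircle (1 : ℚ))
  refine ⟨ψ, ⟨Set.mapsTo_univ _ _, ?_⟩, ?_⟩
  · intro u v _ _ huv
    simp only [← map_sum, huv]
  · intro h
    have : ψ d = 0 := by
      rw [hd, map_sub, map_sum, map_sum, h, sub_self]
    apply hc
    apply myIota_inj
    rw [map_zero]; exact this
end
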